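/- Let T > 0, L > 0, ε > 0, β > 0, ν ≥ 1, t̂ ∈ [0,T). Let ξ̂_{t̂}, γ̂_{t̂} ∈ Λ_{t̂}, let (t_i)_{i≥0} ⊆ [t̂,T] and paths γⁱ_{t_i} ∈ Λ_{t_i} with sup_i ‖γⁱ_{t_i}‖_0 < ∞, and let W_1 : Λ → ℝ satisfy |W_1(γ_t) − W_1(η_s)| ≤ L(1+‖γ_t‖_0+‖η_s‖_0)|s−t|^{1/2} + L‖γ_t−η_s‖_0 for all (t,γ_t), (s,η_s) ∈ [0,T]×Λ. Define, for (t,γ_t) ∈ [t̂,T]×Λ^{t̂}: w_1(γ_t) = W_1(γ_t) − 2⁵β Υ(γ_t, ξ̂_{t̂}) − ε((νT−t)/(νT)) Υ(γ_t) − ε Ῡ(γ_t, γ̂_{t̂}) − Σ_{i=0}^∞ 2^{-i} Ῡ(γⁱ_{t_i}, γ_t). Then for all t̂ ≤ t ≤ s ≤ T and γ_t ∈ Λ^{t̂}: w_1(γ_t) − w_1(γ_{t,s}) ≤ (2L(1+‖γ_t‖_0) + (2ε+4)T^{3/2}) |s−t|^{1/2}. -/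

import Mathlib

set_option linter.unusedVariables false

noncomputable section

open Set Filter Topology

namespace PHJB

/-- Euclidean state space ℝ^d. -/
abbrev E (d : ℕ) : Type := EuclideanSpace ℝ (Fin d)

variable {d n : ℕ}

/-- `‖γ_t - η_s‖₀ = sup_{0 ≤ l ≤ t ∨ s} |γ_t(l ∧ t) - η_s(l ∧ s)|`. -/
def pairDist (t : ℝ) (γ : ℝ → E d) (s : ℝ) (η : ℝ → E d) : ℝ :=
  sSup ((fun l => ‖γ (min l t) - η (min l s)‖) '' Icc 0 (max t s))

/-- `‖γ_t‖₀ = sup_{0 ≤ s ≤ t} |γ_t(s)|`. -/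
def supNorm (t : ℝ) (γ : ℝ → E d) : ℝ :=
  sSup ((fun l => ‖γ l‖) '' Icc 0 t)

/-- `d_∞(γ_t, η_s) = |t - s| + ‖γ_t - η_s‖₀`. -/
def dInfty (t : ℝ) (γ : ℝ → E d) (s : ℝ) (η : ℝ → E d) : ℝ :=
  |t - s| + pairDist t γ s η

/-- `γ` is càdlàg on `[0,t]`. -/
def IsCadlagOn (t : ℝ) (γ : ℝ → E d) : Prop :=
  (∀ s ∈ Ico (0:ℝ) t, ContinuousWithinAt γ (Ici s) s) ∧
  (∀ s ∈ Ioc (0:ℝ) t, ∃ L, Tendsto γ (nhdsWithin s (Iio s)) (nhds L))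

/-- `γ` is continuous on `[0,t]`. -/
def IsContOn (t : ℝ) (γ : ℝ → E d) : Prop :=
  ContinuousOn γ (Icc 0 t)

/-- `(t, γ)` represents an element `γ_t` of `Λ̂^{tBase}` (horizon `T`). -/
def MemHat (T tBase : ℝ) (t : ℝ) (γ : ℝ → E d) : Prop :=
  tBase ≤ t ∧ t ≤ T ∧ IsCadlagOn t γ

/-- `(t, γ)` represents an element `γ_t` of `Λ^{tBase}` (horizon `T`). -/
def Mem (T tBase : ℝ) (t : ℝ) (γ : ℝ → E d) : Prop :=
  tBase ≤ t ∧ t ≤ T ∧ IsContOn t γ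

/-- The functional `S_m(γ_t, η_s)`. -/
def Sm (m : ℕ) (t : ℝ) (γ : ℝ → E d) (s : ℝ) (η : ℝ → E d) : ℝ :=
  if pairDist t γ s η = 0 then 0
  else (pairDist t γ s η ^ (2*m) - ‖γ t - η s‖ ^ (2*m)) ^ 3 / pairDist t γ s η ^ (4*m)

/-- `Υ^{m,M}(γ_t, η_s) = S_m(γ_t,η_s) + M |γ_t(t) - η_s(s)|^{2m}`. -/
def Ups (m : ℕ) (M : ℝ) (t : ℝ) (γ : ℝ → E d) (s : ℝ) (η : ℝ → E d) : ℝ :=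
  Sm m t γ s η + M * ‖γ t - η s‖ ^ (2*m)

/-- `Ῡ^{m,M}(γ_t, η_s) = Υ^{m,M}(γ_t,η_s) + |s - t|²`. -/
def UpsBar (m : ℕ) (M : ℝ) (t : ℝ) (γ : ℝ → E d) (s : ℝ) (η : ℝ → E d) : ℝ :=
  Ups m M t γ s η + (s - t) ^ 2

/-- `Υ^{m,M}(γ_t) = Υ^{m,M}(γ_t, 0_t)`. -/
def Ups0 (m : ℕ) (M : ℝ) (t : ℝ) (γ : ℝ → E d) : ℝ :=
  Ups m M t γ t (fun _ => 0)

/-- Restriction of a raw function to the values it takes on `[0,t]` (the path `γ_t`,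
or its horizontal extension to any later time). -/
def clamp (t : ℝ) (γ : ℝ → E d) : ℝ → E d := fun s => γ (min (max s 0) t)

/-- The horizontal extension `γ_{t,·}` of `γ_t`, as a raw function. -/
def hext (t : ℝ) (γ : ℝ → E d) : ℝ → E d := fun l => γ (min l t)

/-- The vertically bumped path `γ_t^x`. -/
def vbump (t : ℝ) (γ : ℝ → E d) (x : E d) : ℝ → E d :=
  fun s => if s = t then γ t + x else γ s

/-- The standard basis of ℝ^d. -/
def basis (d : ℕ) (i : Fin d) : E d := EuclideanSpace.single i (1:ℝ)

/-- A path functional only depends on the restriction of the path to `[0,t]`. -/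
def Adapted (T tBase : ℝ) (f : ℝ → (ℝ → E d) → ℝ) : Prop :=
  ∀ t γ, MemHat T tBase t γ → f t γ = f t (clamp t γ)

/-- `f ∈ C⁰(Λ̂^{tBase})`: continuity with respect to `d_∞`. -/
def C0Hat (T tBase : ℝ) (f : ℝ → (ℝ → E d) → ℝ) : Prop :=
  ∀ t γ, MemHat T tBase t γ → ∀ ε > 0, ∃ δ > 0, ∀ s η, MemHat T tBase s η →
    dInfty t γ s η < δ → |f s η - f t γ| < ε

/-- `f ∈ C⁰(Λ^{tBase})`: continuity with respect to `d_∞` on continuous paths. -/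
def C0Lam (T tBase : ℝ) (f : ℝ → (ℝ → E d) → ℝ) : Prop :=
  ∀ t γ, Mem T tBase t γ → ∀ ε > 0, ∃ δ > 0, ∀ s η, Mem T tBase s η →
    dInfty t γ s η < δ → |f s η - f t γ| < ε

/-- Polynomial growth in `‖·‖₀`. -/
def PolyGrowth (T tBase : ℝ) (f : ℝ → (ℝ → E d) → ℝ) : Prop :=
  ∃ C : ℝ, ∃ k : ℕ, 0 ≤ C ∧ ∀ t γ, MemHat T tBase t γ →
    |f t γ| ≤ C * (1 + supNorm t γ) ^ k

/-- An element of `C_p^{1,2}(Λ̂^{tBase})`: a functional `F` together with its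
horizontal derivative `Ft`, and first and second vertical derivatives `Fx`, `Fxx`,
all continuous in `d_∞` and of polynomial growth. -/
structure C12pHat (d : ℕ) (T tBase : ℝ) where
  F : ℝ → (ℝ → E d) → ℝ
  Ft : ℝ → (ℝ → E d) → ℝ
  Fx : ℝ → (ℝ → E d) → E d
  Fxx : ℝ → (ℝ → E d) → Matrix (Fin d) (Fin d) ℝ
  adapted : Adapted T tBase F
  contF : C0Hat T tBase F
  vert : ∀ t γ, MemHat T tBase t γ → ∀ i : Fin d,
    HasDerivAt (fun h : ℝ => F t (vbump t γ (h • basis d i))) (Fx t γ i) 0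
  vert2 : ∀ t γ, MemHat T tBase t γ → ∀ i j : Fin d,
    HasDerivAt (fun h : ℝ => Fx t (vbump t γ (h • basis d j)) i) (Fxx t γ j i) 0
  horiz : ∀ t γ, MemHat T tBase t γ → t < T →
    Tendsto (fun h : ℝ => (F (t + h) (clamp t γ) - F t γ) / h)
      (nhdsWithin 0 (Ioi 0)) (nhds (Ft t γ))
  horizT : ∀ γ, MemHat T tBase T γ →
    Tendsto (fun s => Ft s (clamp s γ)) (nhdsWithin T (Iio T)) (nhds (Ft T γ))
  contFt : C0Hat T tBase Ft
  contFx : ∀ i : Fin d, C0Hat T tBase fun t γ => Fx t γ i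
  contFxx : ∀ i j : Fin d, C0Hat T tBase fun t γ => Fxx t γ i j
  growthF : PolyGrowth T tBase F
  growthFt : PolyGrowth T tBase Ft
  growthFx : ∀ i : Fin d, PolyGrowth T tBase fun t γ => Fx t γ i
  growthFxx : ∀ i j : Fin d, PolyGrowth T tBase fun t γ => Fxx t γ i j

/-- Hilbert–Schmidt (Frobenius) norm of a matrix. -/
def frob {k l : ℕ} (A : Matrix (Fin k) (Fin l) ℝ) : ℝ :=
  Real.sqrt (∑ i, ∑ j, (A i j) ^ 2)

/-- Identification of `Fin k → ℝ` with `EuclideanSpace ℝ (Fin k)`. -/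
def toEuc {k : ℕ} (v : Fin k → ℝ) : E k := (WithLp.equiv 2 (Fin k → ℝ)).symm v

/-- The Hamiltonian
`H(γ_t,r,p,l) = sup_u [⟨p, b⟩ + ½ tr(l σ σ^⊤) + q(γ_t, r, σ^⊤ p, u)]`. -/
def hamiltonian (U : Type*) (b : ℝ → (ℝ → E d) → U → E d)
    (σ' : ℝ → (ℝ → E d) → U → Matrix (Fin d) (Fin n) ℝ)
    (q : ℝ → (ℝ → E d) → ℝ → E n → U → ℝ)
    (t : ℝ) (γ : ℝ → E d) (r : ℝ) (p : E d) (l : Matrix (Fin d) (Fin d) ℝ) : ℝ :=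
  ⨆ u : U, ((∑ i, p i * b t γ u i)
    + (1/2) * Matrix.trace (l * (σ' t γ u * (σ' t γ u).transpose))
    + q t γ r (toEuc ((σ' t γ u).transpose.mulVec (fun i => p i))) u)

/-- Hypothesis 2.1 on the coefficients, with Lipschitz/growth constant `L`. -/
structure Hyp (T : ℝ) {d n : ℕ} (U : Type*) [MetricSpace U] (L : ℝ)
    (b : ℝ → (ℝ → E d) → U → E d)
    (σ' : ℝ → (ℝ → E d) → U → Matrix (Fin d) (Fin n) ℝ)
    (q : ℝ → (ℝ → E d) → ℝ → E n → U → ℝ)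
    (φ : (ℝ → E d) → ℝ) : Prop where
  hL : 0 < L
  cont_b : ∀ t γ u, Mem T 0 t γ → ∀ ε > 0, ∃ δ > 0, ∀ s η v, Mem T 0 s η →
    dInfty t γ s η + dist u v < δ → ‖b s η v - b t γ u‖ < ε
  cont_σ : ∀ t γ u, Mem T 0 t γ → ∀ ε > 0, ∃ δ > 0, ∀ s η v, Mem T 0 s η →
    dInfty t γ s η + dist u v < δ → frob (σ' s η v - σ' t γ u) < ε
  cont_q : ∀ t γ (y : ℝ) (z : E n) u, Mem T 0 t γ → ∀ ε > 0, ∃ δ > 0,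
    ∀ s η (y' : ℝ) (z' : E n) v, Mem T 0 s η →
      dInfty t γ s η + |y' - y| + ‖z' - z‖ + dist u v < δ →
      |q s η y' z' v - q t γ y z u| < ε
  cont_φ : ∀ γ, IsContOn T γ → ∀ ε > 0, ∃ δ > 0, ∀ η, IsContOn T η →
    pairDist T γ T η < δ → |φ η - φ γ| < ε
  bound_b : ∀ t γ u, Mem T 0 t γ → ‖b t γ u‖ ^ 2 ≤ L ^ 2 * (1 + supNorm t γ ^ 2)
  bound_σ : ∀ t γ u, Mem T 0 t γ → frob (σ' t γ u) ^ 2 ≤ L ^ 2 * (1 + supNorm t γ ^ 2)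
  lip_b : ∀ t γ γ' u, Mem T 0 t γ → Mem T 0 t γ' →
    ‖b t γ u - b t γ' u‖ ≤ L * pairDist t γ t γ'
  lip_σ : ∀ t γ γ' u, Mem T 0 t γ → Mem T 0 t γ' →
    frob (σ' t γ u - σ' t γ' u) ≤ L * pairDist t γ t γ'
  bound_q : ∀ t γ y z u, Mem T 0 t γ → |q t γ y z u| ≤ L * (1 + supNorm t γ + |y| + ‖z‖)
  lip_q : ∀ t γ γ' y y' z z' u, Mem T 0 t γ → Mem T 0 t γ' →
    |q t γ y z u - q t γ' y' z' u| ≤ L * (pairDist t γ t γ' + |y - y'| + ‖z - z'‖)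
  lip_φ : ∀ γ η, IsContOn T γ → IsContOn T η → |φ γ - φ η| ≤ L * pairDist T γ T η

/-- `Φ ∈ A⁺(γ_t, w)`: `0 = (w - Φ)(γ_t) = sup_{[t,T]×Λ} (w - Φ)`. -/
def InAplus (T t : ℝ) (w : ℝ → (ℝ → E d) → ℝ) (γ : ℝ → E d) (Φ : C12pHat d T t) : Prop :=
  w t γ - Φ.F t γ = 0 ∧ ∀ s η, Mem T t s η → w s η - Φ.F s η ≤ 0

/-- `Φ ∈ A⁻(γ_t, w)`: `0 = (w + Φ)(γ_t) = inf_{[t,T]×Λ} (w + Φ)`. -/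
def InAminus (T t : ℝ) (w : ℝ → (ℝ → E d) → ℝ) (γ : ℝ → E d) (Φ : C12pHat d T t) : Prop :=
  w t γ + Φ.F t γ = 0 ∧ ∀ s η, Mem T t s η → 0 ≤ w s η + Φ.F s η

/-- Viscosity subsolution of the PHJB equation. -/
def IsViscSubsol (T : ℝ) (U : Type*)
    (b : ℝ → (ℝ → E d) → U → E d)
    (σ' : ℝ → (ℝ → E d) → U → Matrix (Fin d) (Fin n) ℝ)
    (q : ℝ → (ℝ → E d) → ℝ → E n → U → ℝ)
    (φ : (ℝ → E d) → ℝ)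
    (w : ℝ → (ℝ → E d) → ℝ) : Prop :=
  (∀ γ, IsContOn T γ → w T γ ≤ φ γ) ∧
  ∀ t γ, Mem T 0 t γ → t < T → ∀ Φ : C12pHat d T t,
    InAplus T t w γ Φ →
    0 ≤ Φ.Ft t γ + hamiltonian U b σ' q t γ (Φ.F t γ) (Φ.Fx t γ) (Φ.Fxx t γ)

/-- Viscosity supersolution of the PHJB equation. -/
def IsViscSupersol (T : ℝ) (U : Type*)
    (b : ℝ → (ℝ → E d) → U → E d)
    (σ' : ℝ → (ℝ → E d) → U → Matrix (Fin d) (Fin n) ℝ)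
    (q : ℝ → (ℝ → E d) → ℝ → E n → U → ℝ)
    (φ : (ℝ → E d) → ℝ)
    (w : ℝ → (ℝ → E d) → ℝ) : Prop :=
  (∀ γ, IsContOn T γ → φ γ ≤ w T γ) ∧
  ∀ t γ, Mem T 0 t γ → t < T → ∀ Φ : C12pHat d T t,
    InAminus T t w γ Φ →
    -Φ.Ft t γ + hamiltonian U b σ' q t γ (-(Φ.F t γ)) (-(Φ.Fx t γ)) (-(Φ.Fxx t γ)) ≤ 0

/-- Gauge-type function on `Λ^{tBase}`. -/
def IsGaugeType (T tBase : ℝ) (ρ : ℝ → (ℝ → E d) → ℝ → (ℝ → E d) → ℝ) : Prop :=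
  (∀ t γ s η, Mem T tBase t γ → Mem T tBase s η → 0 ≤ ρ t γ s η) ∧
  (∀ t γ s η, Mem T tBase t γ → Mem T tBase s η → ∀ ε > 0, ∃ δ > 0,
    ∀ t' γ' s' η', Mem T tBase t' γ' → Mem T tBase s' η' →
      dInfty t γ t' γ' + dInfty s η s' η' < δ →
      |ρ t' γ' s' η' - ρ t γ s η| < ε) ∧
  (∀ s γ, Mem T tBase s γ → ρ s γ s γ = 0) ∧
  (∀ ε > 0, ∃ δ > 0, ∀ s γ l η, Mem T tBase s γ → Mem T tBase l η →
    ρ s γ l η ≤ δ → dInfty s γ l η < ε)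

/-- Upper semicontinuity (w.r.t. `d_∞`) of a path functional. -/
def PathUSC (T tBase : ℝ) (w : ℝ → (ℝ → E d) → ℝ) : Prop :=
  ∀ t γ, Mem T tBase t γ → ∀ c, w t γ < c → ∃ δ > 0, ∀ s η, Mem T tBase s η →
    dInfty t γ s η < δ → w s η < c

/-- Bounded from above. -/
def BddAbovePath (T tBase : ℝ) (w : ℝ → (ℝ → E d) → ℝ) : Prop :=
  ∃ B, ∀ t γ, Mem T tBase t γ → w t γ ≤ B

/-- `limsup_{‖γ_t‖₀ → ∞} w(γ_t)/‖γ_t‖₀ < 0`. -/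
def NegAtInfty (T : ℝ) (w : ℝ → (ℝ → E d) → ℝ) : Prop :=
  ∃ c > 0, ∃ R : ℝ, ∀ t γ, Mem T 0 t γ → R ≤ supNorm t γ → w t γ ≤ -c * supNorm t γ

/-- The function `w̃^{t̂}` of Definition 5.4. -/
def tilde (T tBase : ℝ) (w : ℝ → (ℝ → E d) → ℝ) : ℝ → E d → ℝ := fun t x =>
  if tBase ≤ t then sSup {r | ∃ ξ, Mem T tBase t ξ ∧ ξ t = x ∧ r = w t ξ}
  else sSup {r | ∃ ξ, Mem T tBase tBase ξ ∧ ξ tBase = x ∧ r = w tBase ξ} - Real.sqrt (tBase - t)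

/-- Upper semicontinuous envelope (on `[0,T] × ℝ^d`). -/
def uscEnv (T : ℝ) (g : ℝ → E d → ℝ) : ℝ → E d → ℝ := fun t x =>
  Filter.limsup (fun p : ℝ × E d => g p.1 p.2)
    (nhdsWithin (t, x) ((Icc (0:ℝ) T) ×ˢ (univ : Set (E d))))

/-- A local modulus of continuity. -/
def IsLocalModulus (ρ₁ : ℝ → ℝ → ℝ) : Prop :=
  Continuous (Function.uncurry ρ₁) ∧
  (∀ r, 0 ≤ r → ρ₁ 0 r = 0) ∧
  (∀ a r, 0 ≤ a → 0 ≤ r → 0 ≤ ρ₁ a r) ∧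
  (∀ a b r, 0 ≤ a → 0 ≤ b → 0 ≤ r → ρ₁ (a + b) r ≤ ρ₁ a r + ρ₁ b r) ∧
  (∀ a r r', 0 ≤ a → 0 ≤ r → r ≤ r' → ρ₁ a r ≤ ρ₁ a r')

/-- `(g, gt, gx, gxx)` is a `C^{1,2}` function on `[0,T] × ℝ^d` together with its
time derivative, spatial gradient and spatial Hessian. -/
def IsC12On (T : ℝ) (g gt : ℝ → E d → ℝ) (gx : ℝ → E d → E d)
    (gxx : ℝ → E d → Matrix (Fin d) (Fin d) ℝ) : Prop :=
  Continuous (fun p : ℝ × E d => g p.1 p.2) ∧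
  Continuous (fun p : ℝ × E d => gt p.1 p.2) ∧
  Continuous (fun p : ℝ × E d => gx p.1 p.2) ∧
  Continuous (fun p : ℝ × E d => gxx p.1 p.2) ∧
  (∀ t x, HasDerivAt (fun s => g s x) (gt t x) t) ∧
  (∀ t x (i : Fin d), HasDerivAt (fun h : ℝ => g t (x + h • basis d i)) (gx t x i) 0) ∧
  (∀ t x (i j : Fin d),
    HasDerivAt (fun h : ℝ => gx t (x + h • basis d j) i) (gxx t x j i) 0)

/-- The class `Φ(t̂, x̂)` of Definition 5.3. -/
def InPhiClass (T : ℝ) (that : ℝ) (xhat : E d) (f : ℝ → E d → ℝ) : Prop :=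
  ∃ r > 0, ∀ L > 0, ∀ g gt gx gxx, IsC12On T g gt gx gxx →
    ∃ C > 0, ∀ t x, 0 < t → t < T →
      (∀ s y, 0 ≤ s → s ≤ T → f s y - g s y ≤ f t x - g t x) →
      (|t - that| + ‖x - xhat‖ < r ∧ |f t x| + ‖gx t x‖ + frob (gxx t x) ≤ L) →
      C ≤ gt t x

/-- Bounded and uniformly continuous path functional on `Λ̂^{tBase}`. -/
def UCBoundedHat (T tBase : ℝ) (f : ℝ → (ℝ → E d) → ℝ) : Prop :=
  (∃ B, ∀ t γ, MemHat T tBase t γ → |f t γ| ≤ B) ∧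
  ∀ ε > 0, ∃ δ > 0, ∀ t γ s η, MemHat T tBase t γ → MemHat T tBase s η →
    dInfty t γ s η < δ → |f t γ - f s η| < ε

/-- Basis of ℝ^d × ℝ^d indexed by `Fin d ⊕ Fin d`. -/
def basisProd (d : ℕ) (v : Fin d ⊕ Fin d) : E d × E d :=
  Sum.elim (fun i => (basis d i, 0)) (fun j => (0, basis d j)) v

/-- The full Hessian `∇²φ` of `φ : ℝ^d × ℝ^d → ℝ` as a `(2d) × (2d)` matrix. -/
def hess2 (φ : E d × E d → ℝ) (p : E d × E d) :
    Matrix (Fin d ⊕ Fin d) (Fin d ⊕ Fin d) ℝ :=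
  Matrix.of fun v w => fderiv ℝ (fun x => fderiv ℝ φ x (basisProd d w)) p (basisProd d v)

/-- `∇_{x₁}φ`. -/
def grad1 (φ : E d × E d → ℝ) (p : E d × E d) : E d :=
  toEuc (fun i => fderiv ℝ φ p (basisProd d (Sum.inl i)))

/-- `∇_{x₂}φ`. -/
def grad2 (φ : E d × E d → ℝ) (p : E d × E d) : E d :=
  toEuc (fun i => fderiv ℝ φ p (basisProd d (Sum.inr i)))

/-- Operator norm of a matrix, acting on Euclidean space. -/
def matOpNorm {ι : Type*} [Fintype ι] [DecidableEq ι] (A : Matrix ι ι ℝ) : ℝ :=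
  ‖LinearMap.toContinuousLinearMap (Matrix.toEuclideanLin A)‖

/-- Matrix order `A ≤ B` in the sense of quadratic forms. -/
def matLE {ι : Type*} [Fintype ι] (A B : Matrix ι ι ℝ) : Prop :=
  (B - A).PosSemidef


/-- The state-dependent Hamiltonian `H̄(t,x,r,p,l)`. -/
def hamBar (U : Type*) {d n : ℕ} (bbar : ℝ → E d → U → E d)
    (σbar : ℝ → E d → U → Matrix (Fin d) (Fin n) ℝ)
    (qbar : ℝ → E d → ℝ → E n → U → ℝ)
    (t : ℝ) (x : E d) (r : ℝ) (p : E d) (l : Matrix (Fin d) (Fin d) ℝ) : ℝ :=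
  ⨆ u : U, ((∑ i, p i * bbar t x u i)
    + (1/2) * Matrix.trace (l * (σbar t x u * (σbar t x u).transpose))
    + qbar t x r (toEuc ((σbar t x u).transpose.mulVec (fun i => p i))) u)

/-! The horizontal extension `γ_{t,s}` of `γ_t` has the same `‖·‖₀`-distance to every path and
the same endpoint as `γ_t`, so every `Υ`-term of `w₁` is unchanged by it and only the
time-dependent parts move: `W₁` by its `½`-Hölder continuity in time, the weight
`(νT - t)/(νT)` decreases, and each `|s - r|²` penalty changes by at most
`2T (s - t) ≤ 2T^{3/2} √(s - t)`; the weights `2⁻ⁱ` of the infinite sum add up to `2`. -/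

lemma image_Icc_eq_of_forall_ge_eq {α : Type*} {f : ℝ → α} {a b c : ℝ} (hca : c ≤ a)
    (hab : a ≤ b) (hf : ∀ l, a ≤ l → f l = f a) : f '' Icc c b = f '' Icc c a := by
  refine Subset.antisymm ?_ (image_mono (Icc_subset_Icc le_rfl hab))
  rintro _ ⟨l, ⟨hcl, hlb⟩, rfl⟩
  rcases le_or_gt l a with hla | hal
  · exact ⟨l, ⟨hcl, hla⟩, rfl⟩
  · exact ⟨a, ⟨hca, le_rfl⟩, (hf l hal.le).symm⟩

section HorizontalExtension

variable {d : ℕ} {t s r : ℝ} {γ η : ℝ → E d}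

lemma hext_min (hts : t ≤ s) (γ : ℝ → E d) (l : ℝ) : hext t γ (min l s) = γ (min l t) := by
  rw [hext, min_assoc, min_eq_right hts]

lemma hext_of_le (hts : t ≤ s) (γ : ℝ → E d) : hext t γ s = γ t := by
  rw [hext, min_eq_right hts]

lemma IsContOn.hext (ht : 0 ≤ t) (hγ : IsContOn t γ) : IsContOn s (hext t γ) :=
  hγ.comp (continuous_id.min continuous_const).continuousOn
    fun _ hl => ⟨le_min hl.1 ht, min_le_right _ _⟩

lemma supNorm_hext (ht : 0 ≤ t) (hts : t ≤ s) (γ : ℝ → E d) :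
    supNorm s (hext t γ) = supNorm t γ := by
  rw [supNorm, supNorm, image_Icc_eq_of_forall_ge_eq ht hts fun l hl => by
    simp only [hext, min_eq_right hl, min_self]]
  exact congrArg sSup (image_congr fun l hl => by rw [hext, min_eq_left hl.2])

lemma pairDist_comm (t : ℝ) (γ : ℝ → E d) (s : ℝ) (η : ℝ → E d) :
    pairDist t γ s η = pairDist s η t γ := by
  simp only [pairDist, max_comm t s, norm_sub_rev]

lemma pairDist_self (ht : 0 ≤ t) (γ : ℝ → E d) : pairDist t γ t γ = 0 := by
  simp only [pairDist, sub_self, norm_zero, max_self, (nonempty_Icc.2 ht).image_const,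
    csSup_singleton]

lemma pairDist_hext_left (hts : t ≤ s) (h0 : 0 ≤ max t r) (γ η : ℝ → E d) :
    pairDist s (hext t γ) r η = pairDist t γ r η := by
  simp only [pairDist, hext_min hts]
  rw [image_Icc_eq_of_forall_ge_eq h0 (max_le_max_right r hts) fun l hl => by
    rw [min_eq_right ((le_max_left t r).trans hl), min_eq_right ((le_max_right t r).trans hl),
      min_eq_right (le_max_left t r), min_eq_right (le_max_right t r)]]

lemma pairDist_hext_right (hts : t ≤ s) (h0 : 0 ≤ max t r) (γ η : ℝ → E d) :
    pairDist r η s (hext t γ) = pairDist r η t γ := by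
  rw [pairDist_comm, pairDist_hext_left hts h0, pairDist_comm]

lemma pairDist_hext_self (ht : 0 ≤ t) (hts : t ≤ s) (γ : ℝ → E d) :
    pairDist t γ s (hext t γ) = 0 := by
  rw [pairDist_hext_right hts (le_max_of_le_left ht), pairDist_self ht]

lemma Ups_comm (m : ℕ) (M t : ℝ) (γ : ℝ → E d) (s : ℝ) (η : ℝ → E d) :
    Ups m M t γ s η = Ups m M s η t γ := by
  simp only [Ups, Sm, pairDist_comm t γ, norm_sub_rev (γ t)]

lemma Ups_hext_left (hts : t ≤ s) (h0 : 0 ≤ max t r) (m : ℕ) (M : ℝ) (γ η : ℝ → E d) :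
    Ups m M s (hext t γ) r η = Ups m M t γ r η := by
  simp only [Ups, Sm, pairDist_hext_left hts h0, hext_of_le hts]

lemma Ups_hext_right (hts : t ≤ s) (h0 : 0 ≤ max t r) (m : ℕ) (M : ℝ) (γ η : ℝ → E d) :
    Ups m M r η s (hext t γ) = Ups m M r η t γ := by
  rw [Ups_comm, Ups_hext_left hts h0, Ups_comm]

lemma UpsBar_hext_left (hts : t ≤ s) (h0 : 0 ≤ max t r) (m : ℕ) (M : ℝ) (γ η : ℝ → E d) :
    UpsBar m M s (hext t γ) r η = UpsBar m M t γ r η + ((s - r) ^ 2 - (t - r) ^ 2) := by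
  simp only [UpsBar, Ups_hext_left hts h0, sub_sq_comm r]
  ring

lemma UpsBar_hext_right (hts : t ≤ s) (h0 : 0 ≤ max t r) (m : ℕ) (M : ℝ) (γ η : ℝ → E d) :
    UpsBar m M r η s (hext t γ) = UpsBar m M r η t γ + ((s - r) ^ 2 - (t - r) ^ 2) := by
  simp only [UpsBar, Ups_hext_right hts h0]
  ring

lemma Ups0_hext (ht : 0 ≤ t) (hts : t ≤ s) (m : ℕ) (M : ℝ) (γ : ℝ → E d) :
    Ups0 m M s (hext t γ) = Ups0 m M t γ := by
  rw [Ups0, Ups_hext_left hts (le_max_of_le_left ht)]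
  -- the zero path on `[0, s]` is the horizontal extension of the zero path on `[0, t]`
  exact Ups_hext_right (γ := fun _ => 0) hts (le_max_of_le_left ht) m M γ

end HorizontalExtension

section Nonnegativity

variable {d : ℕ} {t s : ℝ} {γ η : ℝ → E d}

lemma norm_sub_le_pairDist (ht : 0 ≤ t) (hs : 0 ≤ s) (hγ : IsContOn t γ) (hη : IsContOn s η) :
    ‖γ t - η s‖ ≤ pairDist t γ s η := by
  have hcont : ContinuousOn (fun l => ‖γ (min l t) - η (min l s)‖) (Icc 0 (max t s)) :=
    ((hγ.comp (continuous_id.min continuous_const).continuousOn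
      fun _ hl => ⟨le_min hl.1 ht, min_le_right _ _⟩).sub
    (hη.comp (continuous_id.min continuous_const).continuousOn
      fun _ hl => ⟨le_min hl.1 hs, min_le_right _ _⟩)).norm
  refine le_csSup (isCompact_Icc.image_of_continuousOn hcont).bddAbove
    ⟨max t s, ⟨le_max_of_le_left ht, le_rfl⟩, ?_⟩
  simp only [min_eq_right (le_max_left t s), min_eq_right (le_max_right t s)]

lemma Sm_nonneg (m : ℕ) (he : ‖γ t - η s‖ ≤ pairDist t γ s η) : 0 ≤ Sm m t γ s η := by
  unfold Sm
  split_ifs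
  · exact le_rfl
  · have hP := (norm_nonneg _).trans he
    exact div_nonneg (pow_nonneg (sub_nonneg.2 (pow_le_pow_left₀ (norm_nonneg _) he _)) 3)
      (pow_nonneg hP _)

lemma Ups_nonneg (m : ℕ) {M : ℝ} (hM : 0 ≤ M) (he : ‖γ t - η s‖ ≤ pairDist t γ s η) :
    0 ≤ Ups m M t γ s η :=
  add_nonneg (Sm_nonneg m he) (by positivity)

lemma Ups0_nonneg (m : ℕ) {M : ℝ} (hM : 0 ≤ M) (ht : 0 ≤ t) (hγ : IsContOn t γ) :
    0 ≤ Ups0 m M t γ :=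
  Ups_nonneg m hM (norm_sub_le_pairDist (η := fun _ => 0) ht ht hγ continuousOn_const)

end Nonnegativity

lemma abs_sq_sub_sq_le {T r s t : ℝ} (hr0 : 0 ≤ r) (hrT : r ≤ T) (ht : 0 ≤ t) (hts : t ≤ s)
    (hsT : s ≤ T) : |(s - r) ^ 2 - (t - r) ^ 2| ≤ 2 * T * (s - t) := by
  rw [show (s - r) ^ 2 - (t - r) ^ 2 = (s - t) * (s + t - 2 * r) by ring, abs_mul,
    abs_of_nonneg (sub_nonneg.2 hts), mul_comm]
  exact mul_le_mul_of_nonneg_right (abs_le.2 ⟨by linarith, by linarith⟩) (sub_nonneg.2 hts)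

lemma mul_le_rpow_three_halves_mul_sqrt {T x : ℝ} (hx : 0 ≤ x) (hxT : x ≤ T) :
    T * x ≤ T ^ ((3 : ℝ) / 2) * Real.sqrt x := by
  have hT : 0 ≤ T := hx.trans hxT
  rw [show (3 : ℝ) / 2 = 1 + 1 / 2 by norm_num, Real.rpow_add' hT (by norm_num),
    Real.rpow_one, ← Real.sqrt_eq_rpow, mul_assoc]
  gcongr
  calc x = Real.sqrt x * Real.sqrt x := (Real.mul_self_sqrt hx).symm
    _ ≤ Real.sqrt T * Real.sqrt x := by gcongr

lemma summable_half_pow_mul {x : ℕ → ℝ} {C : ℝ} (hx : ∀ i, |x i| ≤ C) :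
    Summable fun i => (1 / 2 : ℝ) ^ i * x i :=
  (summable_geometric_two.mul_right C).of_norm_bounded fun i => by
    rw [norm_mul, norm_pow, Real.norm_of_nonneg (by norm_num : (0 : ℝ) ≤ 1 / 2)]
    exact mul_le_mul_of_nonneg_left (hx i) (by positivity)

lemma tsum_half_pow_mul_le {x : ℕ → ℝ} {C : ℝ} (hx : ∀ i, |x i| ≤ C) :
    ∑' i, (1 / 2 : ℝ) ^ i * x i ≤ 2 * C := by
  calc ∑' i, (1 / 2 : ℝ) ^ i * x i ≤ ∑' i, (1 / 2 : ℝ) ^ i * C :=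
        (summable_half_pow_mul hx).tsum_le_tsum
          (fun i => mul_le_mul_of_nonneg_left (le_of_abs_le (hx i)) (by positivity))
          (summable_geometric_two.mul_right C)
    _ = 2 * C := by rw [tsum_mul_right, tsum_geometric_two]

-- Without summability of `f` both sums are the junk value `0`, hence `0 ≤ c`.
lemma tsum_add_sub_tsum_le {ι : Type*} {f g : ι → ℝ} {c : ℝ} (hg : Summable g)
    (hgc : ∑' i, g i ≤ c) (hc : 0 ≤ c) : ∑' i, (f i + g i) - ∑' i, f i ≤ c := by
  by_cases hf : Summable f
  · rw [hf.tsum_add hg]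
    linarith
  · have hfg : ¬Summable fun i => f i + g i := fun hfg => hf (by simpa using hfg.sub hg)
    rw [tsum_eq_zero_of_not_summable hf, tsum_eq_zero_of_not_summable hfg, sub_zero]
    exact hc

lemma tsum_half_pow_mul_UpsBar_hext_sub_le {d : ℕ} {T t s : ℝ} {ts : ℕ → ℝ}
    (hts : ∀ i, 0 ≤ ts i ∧ ts i ≤ T) (ht : 0 ≤ t) (htst : t ≤ s) (hsT : s ≤ T)
    (m : ℕ) (M : ℝ) (gs : ℕ → ℝ → E d) (γ : ℝ → E d) :
    ∑' i, (1 / 2 : ℝ) ^ i * UpsBar m M (ts i) (gs i) s (hext t γ)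
      - ∑' i, (1 / 2 : ℝ) ^ i * UpsBar m M (ts i) (gs i) t γ ≤ 4 * T * (s - t) := by
  have hpen (i : ℕ) : |(s - ts i) ^ 2 - (t - ts i) ^ 2| ≤ 2 * T * (s - t) :=
    abs_sq_sub_sq_le (hts i).1 (hts i).2 ht htst hsT
  simp only [UpsBar_hext_right htst (le_max_of_le_left ht), mul_add]
  exact tsum_add_sub_tsum_le (summable_half_pow_mul hpen)
    ((tsum_half_pow_mul_le hpen).trans_eq (by ring))
    (by nlinarith [sub_nonneg.2 htst, ht.trans (htst.trans hsT)])

theorem auxiliary_w1_time_shift_estimate_general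
    {d : ℕ} (T L ε β ν : ℝ) (hT : 0 < T) (hL : 0 < L) (hε : 0 < ε)
    (hν : 1 ≤ ν)
    (that : ℝ) (hthat0 : 0 ≤ that) (hthatT : that < T)
    (ξhat γhat : ℝ → E d)
    (ts : ℕ → ℝ) (gs : ℕ → ℝ → E d)
    (hts : ∀ i, that ≤ ts i ∧ ts i ≤ T)
    (W1 : ℝ → (ℝ → E d) → ℝ)
    (hW1 : ∀ t γ s η, Mem T 0 t γ → Mem T 0 s η →
      |W1 t γ - W1 s η| ≤
        L * (1 + supNorm t γ + supNorm s η) * Real.sqrt |s - t| + L * pairDist t γ s η) :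
    ∀ t s γ, that ≤ t → t ≤ s → s ≤ T → Mem T that t γ →
      (W1 t γ - 2 ^ 5 * β * Ups 3 3 t γ that ξhat
          - ε * ((ν * T - t) / (ν * T)) * Ups0 3 3 t γ
          - ε * UpsBar 3 3 t γ that γhat
          - ∑' i : ℕ, (1/2 : ℝ) ^ i * UpsBar 3 3 (ts i) (gs i) t γ)
        - (W1 s (hext t γ) - 2 ^ 5 * β * Ups 3 3 s (hext t γ) that ξhat
          - ε * ((ν * T - s) / (ν * T)) * Ups0 3 3 s (hext t γ)
          - ε * UpsBar 3 3 s (hext t γ) that γhat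
          - ∑' i : ℕ, (1/2 : ℝ) ^ i * UpsBar 3 3 (ts i) (gs i) s (hext t γ))
      ≤ (2 * L * (1 + supNorm t γ) + (2 * ε + 4) * T ^ ((3:ℝ)/2)) * Real.sqrt (s - t) := by
  rintro t s γ hthat htst hsT ⟨-, htT, hγ⟩
  have ht0 : 0 ≤ t := hthat0.trans hthat
  have hst : 0 ≤ s - t := sub_nonneg.2 htst
  have hext0 : 0 ≤ max t that := le_max_of_le_left ht0
  have hW : W1 t γ - W1 s (hext t γ) ≤ 2 * L * (1 + supNorm t γ) * Real.sqrt (s - t) := by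
    have h := hW1 t γ s (hext t γ) ⟨ht0, htT, hγ⟩ ⟨ht0.trans htst, hsT, hγ.hext ht0⟩
    rw [supNorm_hext ht0 htst, pairDist_hext_self ht0 htst, abs_of_nonneg hst] at h
    linarith [le_abs_self (W1 t γ - W1 s (hext t γ)), mul_nonneg hL.le (Real.sqrt_nonneg (s - t))]
  have hweight : ε * ((ν * T - s) / (ν * T)) * Ups0 3 3 s (hext t γ)
      ≤ ε * ((ν * T - t) / (ν * T)) * Ups0 3 3 t γ := by
    have hΥ0 := Ups0_nonneg 3 zero_le_three ht0 hγ
    have hνT : 0 < ν * T := by nlinarith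
    rw [Ups0_hext ht0 htst]
    gcongr
  have hsum := tsum_half_pow_mul_UpsBar_hext_sub_le (fun i => ⟨hthat0.trans (hts i).1, (hts i).2⟩)
    ht0 htst hsT 3 3 gs γ
  have hT32 := mul_le_rpow_three_halves_mul_sqrt hst (by linarith : s - t ≤ T)
  have hpen := le_of_abs_le (abs_sq_sub_sq_le hthat0 hthatT.le ht0 htst hsT)
  rw [Ups_hext_left htst hext0, UpsBar_hext_left htst hext0]
  nlinarith [mul_le_mul_of_nonneg_left hpen hε.le]

/-- time-shift estimate for the auxiliary functional `w₁`. -/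
theorem auxiliary_w1_time_shift_estimate
    {d : ℕ} (T L ε β ν : ℝ) (hT : 0 < T) (hL : 0 < L) (hε : 0 < ε) (hβ : 0 < β)
    (hν : 1 ≤ ν)
    (that : ℝ) (hthat0 : 0 ≤ that) (hthatT : that < T)
    (ξhat γhat : ℝ → E d) (hξ : IsContOn that ξhat) (hγhat : IsContOn that γhat)
    (ts : ℕ → ℝ) (gs : ℕ → ℝ → E d)
    (hts : ∀ i, that ≤ ts i ∧ ts i ≤ T) (hgs : ∀ i, IsContOn (ts i) (gs i))
    (hbd : ∃ B, ∀ i, supNorm (ts i) (gs i) ≤ B)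
    (W1 : ℝ → (ℝ → E d) → ℝ)
    (hW1 : ∀ t γ s η, Mem T 0 t γ → Mem T 0 s η →
      |W1 t γ - W1 s η| ≤
        L * (1 + supNorm t γ + supNorm s η) * Real.sqrt |s - t| + L * pairDist t γ s η) :
    ∀ t s γ, that ≤ t → t ≤ s → s ≤ T → Mem T that t γ →
      (W1 t γ - 2 ^ 5 * β * Ups 3 3 t γ that ξhat
          - ε * ((ν * T - t) / (ν * T)) * Ups0 3 3 t γ
          - ε * UpsBar 3 3 t γ that γhat
          - ∑' i : ℕ, (1/2 : ℝ) ^ i * UpsBar 3 3 (ts i) (gs i) t γ)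
        - (W1 s (hext t γ) - 2 ^ 5 * β * Ups 3 3 s (hext t γ) that ξhat
          - ε * ((ν * T - s) / (ν * T)) * Ups0 3 3 s (hext t γ)
          - ε * UpsBar 3 3 s (hext t γ) that γhat
          - ∑' i : ℕ, (1/2 : ℝ) ^ i * UpsBar 3 3 (ts i) (gs i) s (hext t γ))
      ≤ (2 * L * (1 + supNorm t γ) + (2 * ε + 4) * T ^ ((3:ℝ)/2)) * Real.sqrt (s - t) :=
  auxiliary_w1_time_shift_estimate_general T L ε β ν hT hL hε hν that hthat0 hthatT ξhat γhat ts gs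
    hts W1 hW1
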